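/- Every infinitesimal R-matrix χ of a pre-Cartier quasitriangular bialgebra (H,R,χ) satisfies (Id⊗ε)(χ) = 0 and (ε⊗Id)(χ) = 0. -/

import Mathlib

open scoped TensorProduct

noncomputable section

variable (k H : Type*) [CommRing k] [Ring H] [Bialgebra k H]

/-- leg embedding `a ⊗ b ↦ a ⊗ b ⊗ 1` into `H ⊗ (H ⊗ H)`. -/
def leg12 : H ⊗[k] H →ₐ[k] H ⊗[k] (H ⊗[k] H) :=
  Algebra.TensorProduct.map (AlgHom.id k H) Algebra.TensorProduct.includeLeft

/-- leg embedding `a ⊗ b ↦ 1 ⊗ a ⊗ b`. -/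
def leg23 : H ⊗[k] H →ₐ[k] H ⊗[k] (H ⊗[k] H) :=
  Algebra.TensorProduct.includeRight

/-- leg embedding `a ⊗ b ↦ a ⊗ 1 ⊗ b`. -/
def leg13 : H ⊗[k] H →ₐ[k] H ⊗[k] (H ⊗[k] H) :=
  Algebra.TensorProduct.map (AlgHom.id k H) Algebra.TensorProduct.includeRight

/-- `(Id ⊗ Δ)` as an algebra map `H ⊗ H → H ⊗ (H ⊗ H)`. -/
def idComul : H ⊗[k] H →ₐ[k] H ⊗[k] (H ⊗[k] H) :=
  Algebra.TensorProduct.map (AlgHom.id k H) (Bialgebra.comulAlgHom k H)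

/-- `(Δ ⊗ Id)` as an algebra map `H ⊗ H → H ⊗ (H ⊗ H)` (after reassociation). -/
def comulId : H ⊗[k] H →ₐ[k] H ⊗[k] (H ⊗[k] H) :=
  (Algebra.TensorProduct.assoc k k k H H H).toAlgHom.comp
    (Algebra.TensorProduct.map (Bialgebra.comulAlgHom k H) (AlgHom.id k H))

/-- the flip `a ⊗ b ↦ b ⊗ a` as an algebra map. -/
def swapT : H ⊗[k] H →ₐ[k] H ⊗[k] H := (Algebra.TensorProduct.comm k H H).toAlgHom

/-- A quasitriangular structure on the bialgebra `H`. -/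
structure QT where
  R : H ⊗[k] H
  Rinv : H ⊗[k] H
  mul_inv : R * Rinv = 1
  inv_mul : Rinv * R = 1
  quasi_cocomm : ∀ h : H, swapT k H (Coalgebra.comul (R := k) h) * R = R * Coalgebra.comul (R := k) h
  hex1 : idComul k H R = leg13 k H R * leg12 k H R
  hex2 : comulId k H R = leg13 k H R * leg23 k H R

/-- A pre-Cartier quasitriangular bialgebra structure on `H`. -/
structure PreCartier extends QT k H where
  χ : H ⊗[k] H
  chi_comm : ∀ h : H, χ * Coalgebra.comul (R := k) h = Coalgebra.comul (R := k) h * χ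
  chi_hex1 : idComul k H χ = leg12 k H χ + leg12 k H Rinv * leg13 k H χ * leg12 k H R
  chi_hex2 : comulId k H χ = leg23 k H χ + leg23 k H Rinv * leg13 k H χ * leg23 k H R

/-!
Apply the algebra map `Id ⊗ ε ⊗ ε : H ⊗ H ⊗ H → H` to `(Id ⊗ Δ)(χ) = χ₁₂ + R₁₂⁻¹ χ₁₃ R₁₂`.
It sends `(Id ⊗ Δ)(χ)`, `χ₁₂` and `χ₁₃` alike to `c = (Id ⊗ ε)(χ)`, so `c = c + v c u` where
`u`, `v` are the images of `R`, `R⁻¹` and `u v = 1`; hence `v c u = 0` and `c = u (v c u) v = 0`.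
The map `ε ⊗ ε ⊗ Id` does the same for `(ε ⊗ Id)(χ)` on the second hexagon identity.
-/

section Counit

variable (R A : Type*) [CommSemiring R] [Semiring A] [Bialgebra R A]

def idCounit : A ⊗[R] A →ₐ[R] A :=
  (Algebra.TensorProduct.rid R R A).toAlgHom.comp
    (Algebra.TensorProduct.map (AlgHom.id R A) (Bialgebra.counitAlgHom R A))

def counitId : A ⊗[R] A →ₐ[R] A :=
  (Algebra.TensorProduct.lid R A).toAlgHom.comp
    (Algebra.TensorProduct.map (Bialgebra.counitAlgHom R A) (AlgHom.id R A))

variable {R A}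

@[simp]
lemma idCounit_tmul (a b : A) :
    idCounit R A (a ⊗ₜ b) = Coalgebra.counit (R := R) b • a := by
  simp [idCounit]

@[simp]
lemma counitId_tmul (a b : A) :
    counitId R A (a ⊗ₜ b) = Coalgebra.counit (R := R) a • b := by
  simp [counitId]

lemma idCounit_apply (x : A ⊗[R] A) :
    idCounit R A x = TensorProduct.rid R A (LinearMap.lTensor A Coalgebra.counit x) := by
  induction x using TensorProduct.induction_on with
  | zero => simp
  | tmul a b => simp
  | add x y hx hy => simp only [map_add, hx, hy]

lemma counitId_apply (x : A ⊗[R] A) :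
    counitId R A x = TensorProduct.lid R A (LinearMap.rTensor A Coalgebra.counit x) := by
  induction x using TensorProduct.induction_on with
  | zero => simp
  | tmul a b => simp
  | add x y hx hy => simp only [map_add, hx, hy]

@[simp]
lemma idCounit_comul (a : A) : idCounit R A (Coalgebra.comul a) = a := by
  rw [idCounit_apply, Coalgebra.lTensor_counit_comul, TensorProduct.rid_tmul, one_smul]

@[simp]
lemma counitId_comul (a : A) : counitId R A (Coalgebra.comul a) = a := by
  rw [counitId_apply, Coalgebra.rTensor_counit_comul, TensorProduct.lid_tmul, one_smul]

end Counit

lemma eq_zero_of_eq_add_conj {A : Type*} [Ring A] {u v x : A} (huv : u * v = 1)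
    (h : x = x + v * x * u) : x = 0 := by
  have hconj : v * x * u = 0 := left_eq_add.mp h
  calc x = u * v * x * (u * v) := by rw [huv, one_mul, mul_one]
    _ = u * (v * x * u) * v := by noncomm_ring
    _ = 0 := by rw [hconj, mul_zero, zero_mul]

section Legs

def idCounitCounit : H ⊗[k] (H ⊗[k] H) →ₐ[k] H :=
  (idCounit k H).comp (Algebra.TensorProduct.map (AlgHom.id k H) (idCounit k H))

def counitCounitId : H ⊗[k] (H ⊗[k] H) →ₐ[k] H :=
  (counitId k H).comp (Algebra.TensorProduct.map (AlgHom.id k H) (counitId k H))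

variable {k H}

lemma idCounitCounit_idComul (x : H ⊗[k] H) :
    idCounitCounit k H (idComul k H x) = idCounit k H x := by
  induction x using TensorProduct.induction_on with
  | zero => simp
  | tmul a b => simp [idCounitCounit, idComul]
  | add x y hx hy => simp only [map_add, hx, hy]

lemma idCounitCounit_leg12 (x : H ⊗[k] H) :
    idCounitCounit k H (leg12 k H x) = idCounit k H x := by
  induction x using TensorProduct.induction_on with
  | zero => simp
  | tmul a b => simp [idCounitCounit, leg12]
  | add x y hx hy => simp only [map_add, hx, hy]

lemma idCounitCounit_leg13 (x : H ⊗[k] H) :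
    idCounitCounit k H (leg13 k H x) = idCounit k H x := by
  induction x using TensorProduct.induction_on with
  | zero => simp
  | tmul a b => simp [idCounitCounit, leg13]
  | add x y hx hy => simp only [map_add, hx, hy]

lemma counitCounitId_assoc :
    (counitCounitId k H).comp (Algebra.TensorProduct.assoc k k k H H H).toAlgHom =
      (counitId k H).comp (Algebra.TensorProduct.map (counitId k H) (AlgHom.id k H)) :=
  AlgHom.toLinearMap_injective <| TensorProduct.ext_threefold fun a b c => by
    simp [counitCounitId, smul_smul, mul_comm]

lemma counitCounitId_comulId (x : H ⊗[k] H) :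
    counitCounitId k H (comulId k H x) = counitId k H x := by
  induction x using TensorProduct.induction_on with
  | zero => simp
  | tmul a b =>
    have := congr($counitCounitId_assoc (Coalgebra.comul (R := k) a ⊗ₜ b))
    simpa [comulId] using this
  | add x y hx hy => simp only [map_add, hx, hy]

lemma counitCounitId_leg23 (x : H ⊗[k] H) :
    counitCounitId k H (leg23 k H x) = counitId k H x := by
  induction x using TensorProduct.induction_on with
  | zero => simp
  | tmul a b => simp [counitCounitId, leg23]
  | add x y hx hy => simp only [map_add, hx, hy]

lemma counitCounitId_leg13 (x : H ⊗[k] H) :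
    counitCounitId k H (leg13 k H x) = counitId k H x := by
  induction x using TensorProduct.induction_on with
  | zero => simp
  | tmul a b => simp [counitCounitId, leg13]
  | add x y hx hy => simp only [map_add, hx, hy]

end Legs

/-- Every infinitesimal `R`-matrix `χ` of a pre-Cartier quasitriangular
bialgebra `(H, R, χ)` satisfies `(Id ⊗ ε)(χ) = 0` and `(ε ⊗ Id)(χ) = 0`. -/
theorem counit_infinitesimal_R_matrix (P : PreCartier k H) :
    LinearMap.lTensor H (Coalgebra.counit (R := k) (A := H)) P.χ = 0 ∧
    LinearMap.rTensor H (Coalgebra.counit (R := k) (A := H)) P.χ = 0 := by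
  constructor
  · have h := congr(idCounitCounit k H $P.chi_hex1)
    simp only [map_add, map_mul, idCounitCounit_idComul, idCounitCounit_leg12,
      idCounitCounit_leg13] at h
    have hR : idCounit k H P.R * idCounit k H P.Rinv = 1 := by
      rw [← map_mul, P.mul_inv, map_one]
    simpa [idCounit_apply] using eq_zero_of_eq_add_conj hR h
  · have h := congr(counitCounitId k H $P.chi_hex2)
    simp only [map_add, map_mul, counitCounitId_comulId, counitCounitId_leg23,
      counitCounitId_leg13] at h
    have hR : counitId k H P.R * counitId k H P.Rinv = 1 := by
      rw [← map_mul, P.mul_inv, map_one]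
    simpa [counitId_apply] using eq_zero_of_eq_add_conj hR h

end
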